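/- Let S5 S10 : Finset ℤ, let E be a predicate on charge spectra that is monotone under ⊆ (whenever x ⊆ y and E x, also E y), and let C be a set of charge spectra such that: (a) every x ∈ C allows the top Yukawa, satisfies ¬E x, and is complete; (b) for every x ∈ C and q ∈ S5, if insertQ5 x q satisfies ¬E, then insertQ5 x q ∈ C; (c) for every x ∈ C and q ∈ S10, if insertQ10 x q satisfies ¬E, then insertQ10 x q ∈ C; (d) for every w ∈ ofFinset S5 S10 that minimally allows the top Yukawa and all a, b ∈ S5, if the completion c = ⟨some a, w.qHu, {b}, w.Q10⟩ satisfies ¬E c, then c ∈ C. Then for every x ∈ ofFinset S5 S10: x ∈ C if and only if x allows the top Yukawa, ¬E x, and x is complete. -/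
import Mathlib


/-- A charge spectrum for the `SU(5)` model: optional Higgs charges and
finite sets of distinct matter charges. -/
structure ChargeSpectrum where
  qHd : Option ℤ
  qHu : Option ℤ
  Q5 : Finset ℤ
  Q10 : Finset ℤ
deriving DecidableEq

namespace ChargeSpectrum

instance : HasSubset ChargeSpectrum where
  Subset x y :=
    x.qHd.toFinset ⊆ y.qHd.toFinset ∧
    x.qHu.toFinset ⊆ y.qHu.toFinset ∧
    x.Q5 ⊆ y.Q5 ∧ x.Q10 ⊆ y.Q10

/-- `x` allows the top Yukawa coupling `10 10 5_Hu`. -/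
def AllowsTopYukawa (x : ChargeSpectrum) : Prop :=
  ∃ q : ℤ, x.qHu = some q ∧ ∃ q1 ∈ x.Q10, ∃ q2 ∈ x.Q10, q1 + q2 = q

/-- `x` is complete: both Higgs sectors present, both matter sectors nonempty. -/
def IsComplete (x : ChargeSpectrum) : Prop :=
  x.qHd.isSome ∧ x.qHu.isSome ∧ x.Q5 ≠ ∅ ∧ x.Q10 ≠ ∅

/-- `x` allows at least one of the dangerous operators μ, β, Λ, W1, W2, W4, K1, K2. -/
def IsPhenoConstrained (x : ChargeSpectrum) : Prop :=
  (∃ a : ℤ, x.qHd = some a ∧ x.qHu = some a) ∨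
  (∃ b : ℤ, x.qHu = some b ∧ b ∈ x.Q5) ∨
  (∃ q5 ∈ x.Q5, ∃ q5' ∈ x.Q5, ∃ q10 ∈ x.Q10, q5 + q5' + q10 = 0) ∨
  (∃ q10 ∈ x.Q10, ∃ q10' ∈ x.Q10, ∃ q10'' ∈ x.Q10, ∃ q5 ∈ x.Q5,
    q10 + q10' + q10'' + q5 = 0) ∨
  (∃ a : ℤ, x.qHd = some a ∧ ∃ q10 ∈ x.Q10, ∃ q10' ∈ x.Q10, ∃ q10'' ∈ x.Q10,
    q10 + q10' + q10'' + a = 0) ∨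
  (∃ a : ℤ, x.qHd = some a ∧ ∃ b : ℤ, x.qHu = some b ∧ ∃ q5 ∈ x.Q5,
    q5 + a - 2 * b = 0) ∨
  (∃ q10 ∈ x.Q10, ∃ q10' ∈ x.Q10, ∃ q5 ∈ x.Q5, q10 + q10' - q5 = 0) ∨
  (∃ a : ℤ, x.qHd = some a ∧ ∃ b : ℤ, x.qHu = some b ∧ ∃ q10 ∈ x.Q10,
    a + b + q10 = 0)

/-- `w` minimally allows the top Yukawa: it allows it, but no proper
sub-spectrum does. -/
def MinimallyAllowsTopYukawa (w : ChargeSpectrum) : Prop :=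
  AllowsTopYukawa w ∧ ∀ y : ChargeSpectrum, y ⊆ w → y ≠ w → ¬ AllowsTopYukawa y

/-- The bounded class of charge spectra built from the finite charge menus
`S5` and `S10`. -/
def ofFinset (S5 S10 : Finset ℤ) : Finset ChargeSpectrum :=
  ((({none} ∪ S5.image Option.some) ×ˢ ({none} ∪ S5.image Option.some)) ×ˢ
      (S5.powerset ×ˢ S10.powerset)).image
    fun p => ⟨p.1.1, p.1.2, p.2.1, p.2.2⟩

/-- Insert a charge into the `Q5` sector. -/
def insertQ5 (x : ChargeSpectrum) (q : ℤ) : ChargeSpectrum :=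
  ⟨x.qHd, x.qHu, insert q x.Q5, x.Q10⟩

/-- Insert a charge into the `Q10` sector. -/
def insertQ10 (x : ChargeSpectrum) (q : ℤ) : ChargeSpectrum :=
  ⟨x.qHd, x.qHu, x.Q5, insert q x.Q10⟩

/-- `MemV S5 S10 x` says that `x` lies in the least class `V(S5, S10)` generated
from seeds (completions of minimal top-Yukawa witnesses that are not
pheno-constrained) by the `Q5`- and `Q10`-closure moves. -/
inductive MemV (S5 S10 : Finset ℤ) : ChargeSpectrum → Prop
  | seed (w : ChargeSpectrum) (hw : w ∈ ofFinset S5 S10)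
      (hmin : MinimallyAllowsTopYukawa w) (a b : ℤ) (ha : a ∈ S5) (hb : b ∈ S5)
      (hc : ¬ IsPhenoConstrained ⟨some a, w.qHu, {b}, w.Q10⟩) :
      MemV S5 S10 ⟨some a, w.qHu, {b}, w.Q10⟩
  | q5Closure (x : ChargeSpectrum) (hx : MemV S5 S10 x) (q : ℤ) (hq : q ∈ S5)
      (h : ¬ IsPhenoConstrained (insertQ5 x q)) : MemV S5 S10 (insertQ5 x q)
  | q10Closure (x : ChargeSpectrum) (hx : MemV S5 S10 x) (q : ℤ) (hq : q ∈ S10)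
      (h : ¬ IsPhenoConstrained (insertQ10 x q)) : MemV S5 S10 (insertQ10 x q)

lemma mem_ofFinset_iff {S5 S10 : Finset ℤ} {x : ChargeSpectrum} :
    x ∈ ofFinset S5 S10 ↔
      (x.qHd ∈ ({none} ∪ S5.image Option.some : Finset (Option ℤ))) ∧
      (x.qHu ∈ ({none} ∪ S5.image Option.some : Finset (Option ℤ))) ∧
      x.Q5 ⊆ S5 ∧ x.Q10 ⊆ S10 := by
  constructor
  · intro h
    simp only [ofFinset, Finset.mem_image] at h
    obtain ⟨⟨⟨p1, p2⟩, ⟨p3, p4⟩⟩, hp, rfl⟩ := h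
    simp only [Finset.mem_product, Finset.mem_powerset] at hp
    exact ⟨hp.1.1, hp.1.2, hp.2.1, hp.2.2⟩
  · rintro ⟨h1, h2, h3, h4⟩
    simp only [ofFinset, Finset.mem_image]
    exact ⟨⟨⟨x.qHd, x.qHu⟩, ⟨x.Q5, x.Q10⟩⟩,
      by simp only [Finset.mem_product, Finset.mem_powerset]; exact ⟨⟨h1, h2⟩, h3, h4⟩, rfl⟩

lemma minimallyAllows_witness (q q1 q2 : ℤ) (hsum : q1 + q2 = q) :
    MinimallyAllowsTopYukawa ⟨none, some q, ∅, {q1, q2}⟩ := by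
  constructor
  · exact ⟨q, rfl, q1, by simp, q2, by simp, hsum⟩
  · rintro ⟨yd, yu, Y5, Y10⟩ ⟨hd, hu, h5, h10⟩ hne ⟨q', hqu', r1, hr1, r2, hr2, hs⟩
    apply hne
    simp only at hd hu h5 h10 hqu' hr1 hr2
    subst hqu'
    have hd' : yd = none := by
      cases h : yd with
      | none => rfl
      | some v => exfalso; rw [h] at hd; have hv : v ∈ (none : Option ℤ).toFinset := hd (by simp); simp at hv
    have h5' : Y5 = ∅ := Finset.subset_empty.mp h5
    have hu' : q' = q := by
      have hv : q' ∈ (some q : Option ℤ).toFinset := hu (by simp)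
      simpa using hv
    subst hu'
    have hr1' := h10 hr1
    have hr2' := h10 hr2
    simp only [Finset.mem_insert, Finset.mem_singleton] at hr1' hr2'
    have h10' : Y10 = {q1, q2} := by
      apply Finset.Subset.antisymm h10
      rw [Finset.insert_subset_iff, Finset.singleton_subset_iff]
      rcases hr1' with h1 | h1 <;> rcases hr2' with h2 | h2
      · exact ⟨h1 ▸ hr1, (show r1 = q2 by omega) ▸ hr1⟩
      · exact ⟨h1 ▸ hr1, h2 ▸ hr2⟩
      · exact ⟨h2 ▸ hr2, h1 ▸ hr1⟩
      · exact ⟨(show r1 = q1 by omega) ▸ hr1, h1 ▸ hr1⟩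
    rw [hd', h5', h10']

end ChargeSpectrum

open ChargeSpectrum in
/-- abstract completeness theorem for a candidate class satisfying
witness, completion, and closure hypotheses, with a monotone exclusion predicate `E`. -/
theorem completeness_of_closed_class (S5 S10 : Finset ℤ)
    (E : ChargeSpectrum → Prop)
    (hE_mono : ∀ x y : ChargeSpectrum, x ⊆ y → E x → E y)
    (C : Set ChargeSpectrum)
    (hmem : ∀ x ∈ C, AllowsTopYukawa x ∧ ¬ E x ∧ IsComplete x)
    (hQ5 : ∀ x ∈ C, ∀ q ∈ S5, ¬ E (insertQ5 x q) → insertQ5 x q ∈ C)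
    (hQ10 : ∀ x ∈ C, ∀ q ∈ S10, ¬ E (insertQ10 x q) → insertQ10 x q ∈ C)
    (hseed : ∀ w ∈ ofFinset S5 S10, MinimallyAllowsTopYukawa w →
      ∀ a ∈ S5, ∀ b ∈ S5,
        ¬ E ⟨some a, w.qHu, {b}, w.Q10⟩ → (⟨some a, w.qHu, {b}, w.Q10⟩ : ChargeSpectrum) ∈ C) :
    ∀ x ∈ ofFinset S5 S10,
      x ∈ C ↔ AllowsTopYukawa x ∧ ¬ E x ∧ IsComplete x := by
  intro x hx
  constructor
  · intro h; exact hmem x h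
  · rintro ⟨hY, hEx, hc⟩
    obtain ⟨q, hqu, q1, hq1, q2, hq2, hsum⟩ := hY
    obtain ⟨hd1, hu1, h5, h10⟩ := mem_ofFinset_iff.mp hx
    obtain ⟨hdS, huS, h5ne, h10ne⟩ := hc
    obtain ⟨a, ha⟩ := Option.isSome_iff_exists.mp hdS
    have haS : a ∈ S5 := by rw [ha] at hd1; simpa using hd1
    have hqS : q ∈ S5 := by rw [hqu] at hu1; simpa using hu1
    obtain ⟨b, hb⟩ := Finset.nonempty_iff_ne_empty.mpr h5ne
    have hbS : b ∈ S5 := h5 hb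
    have hq1S : q1 ∈ S10 := h10 hq1
    have hq2S : q2 ∈ S10 := h10 hq2
    -- subsets of x are not excluded
    have hsubx : ∀ A B : Finset ℤ, A ⊆ x.Q5 → B ⊆ x.Q10 →
        (⟨some a, some q, A, B⟩ : ChargeSpectrum) ⊆ x := by
      intro A B hA hB
      refine ⟨?_, ?_, hA, hB⟩
      · rw [ha]
      · rw [hqu]
    have hnE : ∀ A B : Finset ℤ, A ⊆ x.Q5 → B ⊆ x.Q10 →
        ¬ E (⟨some a, some q, A, B⟩ : ChargeSpectrum) :=
      fun A B hA hB h => hEx (hE_mono _ _ (hsubx A B hA hB) h)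
    -- the minimal witness
    have hwmem : (⟨none, some q, ∅, {q1, q2}⟩ : ChargeSpectrum) ∈ ofFinset S5 S10 := by
      refine mem_ofFinset_iff.mpr ⟨by simp, by simp [hqS], by simp, ?_⟩
      rw [Finset.insert_subset_iff, Finset.singleton_subset_iff]
      exact ⟨hq1S, hq2S⟩
    have hQ12 : ({q1, q2} : Finset ℤ) ⊆ x.Q10 := by
      rw [Finset.insert_subset_iff, Finset.singleton_subset_iff]
      exact ⟨hq1, hq2⟩
    -- seed membership
    have hc0 : (⟨some a, some q, {b}, {q1, q2}⟩ : ChargeSpectrum) ∈ C := by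
      have := hseed _ hwmem (minimallyAllows_witness q q1 q2 hsum) a haS b hbS
      exact this (hnE {b} {q1, q2} (Finset.singleton_subset_iff.mpr hb) hQ12)
    -- fill in Q5
    have step5 : ∀ A : Finset ℤ, A ⊆ x.Q5 →
        (⟨some a, some q, insert b A, {q1, q2}⟩ : ChargeSpectrum) ∈ C := by
      intro A
      induction A using Finset.induction_on with
      | empty => intro _; simpa using hc0
      | @insert q' A hq'A ih =>
        intro hsub
        have hA := ih (fun t ht => hsub (Finset.mem_insert_of_mem ht))
        have hq'x : q' ∈ x.Q5 := hsub (Finset.mem_insert_self _ _)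
        have heq : insertQ5 ⟨some a, some q, insert b A, {q1, q2}⟩ q' =
            ⟨some a, some q, insert b (insert q' A), {q1, q2}⟩ := by
          simp [insertQ5, Finset.insert_comm]
        have hins : insert b (insert q' A) ⊆ x.Q5 := by
          rw [Finset.insert_subset_iff]
          exact ⟨hb, hsub⟩
        have := hQ5 _ hA q' (h5 hq'x) (by rw [heq]; exact hnE _ _ hins hQ12)
        rwa [heq] at this
    have h5full : (⟨some a, some q, x.Q5, {q1, q2}⟩ : ChargeSpectrum) ∈ C := by
      have := step5 x.Q5 (Finset.Subset.refl _)
      rwa [Finset.insert_eq_self.mpr hb] at this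
    -- fill in Q10
    have step10 : ∀ B : Finset ℤ, B ⊆ x.Q10 →
        (⟨some a, some q, x.Q5, {q1, q2} ∪ B⟩ : ChargeSpectrum) ∈ C := by
      intro B
      induction B using Finset.induction_on with
      | empty => intro _; simpa using h5full
      | @insert q' B hq'B ih =>
        intro hsub
        have hB := ih (fun t ht => hsub (Finset.mem_insert_of_mem ht))
        have hq'x : q' ∈ x.Q10 := hsub (Finset.mem_insert_self _ _)
        have heq : insertQ10 ⟨some a, some q, x.Q5, {q1, q2} ∪ B⟩ q' =
            ⟨some a, some q, x.Q5, {q1, q2} ∪ insert q' B⟩ := by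
          simp [insertQ10, Finset.union_insert]
        have hins : {q1, q2} ∪ insert q' B ⊆ x.Q10 :=
          Finset.union_subset hQ12 hsub
        have := hQ10 _ hB q' (h10 hq'x) (by rw [heq]; exact hnE _ _ (Finset.Subset.refl _) hins)
        rwa [heq] at this
    have hfull := step10 x.Q10 (Finset.Subset.refl _)
    rw [Finset.union_eq_right.mpr hQ12] at hfull
    have hxeq : (⟨some a, some q, x.Q5, x.Q10⟩ : ChargeSpectrum) = x := by
      rw [← ha, ← hqu]
    rwa [hxeq] at hfull
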